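/- The cover pebbling number of the d-dimensional hypercube Q^d equals 3^d, for every positive integer d. -/

import Mathlib

open Finset

/-- A pebbling step on graph `G`: remove two pebbles from a vertex `u`,
place one pebble on an adjacent vertex `v`. -/
def PebbleStep {V : Type*} (G : SimpleGraph V) (C C' : V → ℕ) : Prop :=
  ∃ u v : V, G.Adj u v ∧ 2 ≤ C u ∧ C' u = C u - 2 ∧ C' v = C v + 1 ∧
    ∀ x : V, x ≠ u → x ≠ v → C' x = C x

/-- A configuration is coverable if after some sequence of pebbling steps
every vertex has at least one pebble. -/
def Coverable {V : Type*} (G : SimpleGraph V) (C : V → ℕ) : Prop :=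
  ∃ C' : V → ℕ, Relation.ReflTransGen (PebbleStep G) C C' ∧ ∀ v : V, 1 ≤ C' v

/-- The `d`-dimensional hypercube: vertices are binary `d`-tuples, adjacent
exactly when they differ in one coordinate. -/
def cube (d : ℕ) : SimpleGraph (Fin d → Bool) where
  Adj x y := hammingDist x y = 1
  symm := ⟨fun x y (h : hammingDist x y = 1) => by show hammingDist y x = 1; rw [hammingDist_comm]; exact h⟩
  loopless := ⟨fun x h => by simp [hammingDist_self] at h⟩

/-!
Upper bound, by induction on `d`: split `Q^(d+1)` along the first coordinate into two copies
of `Q^d`. If the lighter half holds `s < 3^d` pebbles, the heavier one holds at least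
`3^(d+1) - s`, so it can push `3^d - s` pebbles across the matching edges between the halves
(paying two for each; a half with more than `2^d` pebbles always has a vertex with two) and still
keep `3^d`; both halves are then covered by induction, one after the other.

Lower bound: weigh a pebble on `x` by `2 ^ hammingDist x r`. A pebbling step never increases the
total weight, a covering configuration weighs at least `∑ x, 2 ^ hammingDist x r = 3^d`, and `m`
pebbles stacked on `r` weigh `m`.
-/

open Function

section Pebbling

variable {V W : Type*} {G : SimpleGraph V} {H : SimpleGraph W}

theorem pebbleStep_iff_add_single [DecidableEq V] {C C' : V → ℕ} :
    PebbleStep G C C' ↔ ∃ u v, G.Adj u v ∧ C' + Pi.single u 2 = C + Pi.single v 1 := by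
  constructor
  · rintro ⟨u, v, huv, h2, hu, hv, hrest⟩
    refine ⟨u, v, huv, funext fun x => ?_⟩
    by_cases hxu : x = u
    · subst hxu
      simp only [Pi.add_apply, Pi.single_eq_same, Pi.single_eq_of_ne huv.ne, hu]
      omega
    by_cases hxv : x = v
    · subst hxv
      simp [hxu, hv]
    · simp [hxu, hxv, hrest x hxu hxv]
  · rintro ⟨u, v, huv, h⟩
    have hu := congrFun h u
    have hv := congrFun h v
    simp only [Pi.add_apply, Pi.single_eq_same, Pi.single_eq_of_ne huv.ne,
      Pi.single_eq_of_ne huv.ne.symm, add_zero] at hu hv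
    refine ⟨u, v, huv, by omega, by omega, hv, fun x hxu hxv => ?_⟩
    simpa [Pi.single_apply, hxu, hxv] using congrFun h x

theorem Coverable.of_reflTransGen {C C' : V → ℕ} (h : Relation.ReflTransGen (PebbleStep G) C C')
    (hC' : Coverable G C') : Coverable G C :=
  let ⟨D, hD, hcov⟩ := hC'
  ⟨D, h.trans hD, hcov⟩

section Weight

variable [Fintype V] {w : V → ℕ}

theorem PebbleStep.weightedSum_le (hw : ∀ u v, G.Adj u v → w v ≤ 2 * w u) {C C' : V → ℕ}
    (h : PebbleStep G C C') :
    ∑ x, C' x * w x ≤ ∑ x, C x * w x := by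
  classical
  obtain ⟨u, v, huv, he⟩ := pebbleStep_iff_add_single.1 h
  have := congrArg (fun D => ∑ x, D x * w x) he
  simp only [Pi.add_apply, add_mul, sum_add_distrib, Pi.single_apply, ite_mul, zero_mul,
    sum_ite_eq', mem_univ, if_true] at this
  linarith [hw u v huv]

theorem weightedSum_le_of_reflTransGen (hw : ∀ u v, G.Adj u v → w v ≤ 2 * w u) {C C' : V → ℕ}
    (h : Relation.ReflTransGen (PebbleStep G) C C') : ∑ x, C' x * w x ≤ ∑ x, C x * w x := by
  induction h with
  | refl => exact le_rfl
  | tail _ hstep ih => exact (hstep.weightedSum_le hw).trans ih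

theorem Coverable.sum_weight_le (hw : ∀ u v, G.Adj u v → w v ≤ 2 * w u) {C : V → ℕ}
    (hC : Coverable G C) :
    ∑ x, w x ≤ ∑ x, C x * w x := by
  obtain ⟨C', hCC', hcov⟩ := hC
  calc ∑ x, w x ≤ ∑ x, C' x * w x := sum_le_sum fun x _ => le_mul_of_one_le_left' (hcov x)
    _ ≤ ∑ x, C x * w x := weightedSum_le_of_reflTransGen hw hCC'

end Weight

theorem extend_comp_self {α β γ : Type*} (f : α → β) (g : β → γ) : extend f (g ∘ f) g = g := by
  funext x
  by_cases hx : ∃ a, f a = x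
  · obtain ⟨a, rfl⟩ := hx
    exact FactorsThrough.extend_apply (fun _ _ h => congrArg g h) g a
  · exact extend_apply' _ _ _ hx

theorem PebbleStep.extend (f : G ↪g H) (D : W → ℕ) {C C' : V → ℕ} (h : PebbleStep G C C') :
    PebbleStep H (extend f C D) (extend f C' D) := by
  obtain ⟨u, v, huv, h2, hu, hv, hrest⟩ := h
  refine ⟨f u, f v, f.map_adj_iff.2 huv, ?_, ?_, ?_, fun x hxu hxv => ?_⟩
  · rwa [f.injective.extend_apply]
  · rw [f.injective.extend_apply, f.injective.extend_apply, hu]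
  · rw [f.injective.extend_apply, f.injective.extend_apply, hv]
  by_cases hx : ∃ a, f a = x
  · obtain ⟨a, rfl⟩ := hx
    simp only [f.injective.extend_apply]
    exact hrest a (fun h => hxu (h ▸ rfl)) (fun h => hxv (h ▸ rfl))
  · simp only [extend_apply' _ _ _ hx]

theorem exists_reflTransGen_cover_range (f : G ↪g H) {C : W → ℕ} (hC : Coverable G (C ∘ f)) :
    ∃ C', Relation.ReflTransGen (PebbleStep H) C C' ∧ (∀ v, 1 ≤ C' (f v)) ∧
      ∀ x, (¬∃ v, f v = x) → C' x = C x := by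
  obtain ⟨A, hA, hcov⟩ := hC
  refine ⟨extend f A C, ?_, fun v => ?_, fun x hx => extend_apply' _ _ _ hx⟩
  · have := Relation.ReflTransGen.lift (extend f · C) (fun _ _ => PebbleStep.extend f C) _ _ hA
    rwa [onFun, extend_comp_self] at this
  · simpa only [f.injective.extend_apply] using hcov v

theorem exists_reflTransGen_transfer [Fintype V] [DecidableEq W] {f g : V → W}
    (hf : Injective f) (hg : Injective g) (hfg : ∀ y z, f y ≠ g z) (hadj : ∀ y, H.Adj (f y) (g y))
    (t : ℕ) (C : W → ℕ) (hC : 2 * t + Fintype.card V ≤ ∑ y, C (f y) + 1) :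
    ∃ C', Relation.ReflTransGen (PebbleStep H) C C' ∧
      ∑ y, C' (f y) + 2 * t = ∑ y, C (f y) ∧ ∑ y, C' (g y) = ∑ y, C (g y) + t := by
  classical
  induction t generalizing C with
  | zero => exact ⟨C, .refl, rfl, rfl⟩
  | succ t ih =>
    obtain ⟨y₀, -, hy₀⟩ : ∃ y₀ ∈ univ, 1 < C (f y₀) :=
      exists_lt_of_sum_lt (by simp only [sum_const, card_univ, smul_eq_mul, mul_one]; omega)
    set C₁ := C + Pi.single (g y₀) 1 - Pi.single (f y₀) 2
    have he : C₁ + Pi.single (f y₀) 2 = C + Pi.single (g y₀) 1 := by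
      funext x
      by_cases hx : x = f y₀
      · subst hx
        simp only [C₁, Pi.add_apply, Pi.sub_apply, Pi.single_eq_same,
          Pi.single_eq_of_ne (hfg y₀ y₀)]
        omega
      · simp [C₁, hx]
    have hf₁ : ∑ y, C₁ (f y) + 2 = ∑ y, C (f y) := by
      simpa [sum_add_distrib, Pi.single_apply, hf.eq_iff, hfg] using
        congrArg (fun D => ∑ y, D (f y)) he
    have hg₁ : ∑ y, C₁ (g y) = ∑ y, C (g y) + 1 := by
      simpa [sum_add_distrib, Pi.single_apply, hg.eq_iff, (hfg _ _).symm] using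
        congrArg (fun D => ∑ y, D (g y)) he
    obtain ⟨C', hC₁C', hf', hg'⟩ := ih C₁ (by omega)
    exact ⟨C', .head (pebbleStep_iff_add_single.2 ⟨_, _, hadj y₀, he⟩) hC₁C', by omega, by omega⟩

end Pebbling

section Cube

variable {d : ℕ}

theorem hammingDist_cons {n : ℕ} {β : Type*} [DecidableEq β] (a b : β) (x y : Fin n → β) :
    hammingDist (Fin.cons a x : Fin (n + 1) → β) (Fin.cons b y) =
      (if a = b then 0 else 1) + hammingDist x y := by
  simp only [hammingDist, card_filter, Fin.sum_univ_succ, Fin.cons_zero, Fin.cons_succ]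
  by_cases h : a = b <;> simp [h]

theorem sum_pi_fin_succ {n : ℕ} {β M : Type*} [Fintype β] [AddCommMonoid M]
    (F : (Fin (n + 1) → β) → M) : ∑ x, F x = ∑ a, ∑ y, F (Fin.cons a y) :=
  (Fintype.sum_equiv (Fin.consEquiv fun _ => β) _ F fun _ => rfl).symm.trans
    (Fintype.sum_prod_type _)

def cubeCons (d : ℕ) (b : Bool) : cube d ↪g cube (d + 1) where
  toFun := Fin.cons (α := fun _ => Bool) b
  inj' := Fin.cons_right_injective (α := fun _ => Bool) b
  map_rel_iff' {x y} := by
    change hammingDist (Fin.cons b x : Fin (d + 1) → Bool) (Fin.cons b y) = 1 ↔ _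
    rw [hammingDist_cons, if_pos rfl, zero_add]
    rfl

@[simp]
theorem cubeCons_apply (b : Bool) (x : Fin d → Bool) : cubeCons d b x = Fin.cons b x :=
  rfl

theorem cube_adj_cons_not (b : Bool) (y : Fin d → Bool) :
    (cube (d + 1)).Adj (Fin.cons b y) (Fin.cons (!b) y) := by
  change hammingDist _ _ = 1
  simp [hammingDist_cons]

theorem coverable_of_coverable_cons (b : Bool) {C : (Fin (d + 1) → Bool) → ℕ}
    (h : Coverable (cube d) (C ∘ cubeCons d b)) (h' : Coverable (cube d) (C ∘ cubeCons d (!b))) :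
    Coverable (cube (d + 1)) C := by
  obtain ⟨C₁, hCC₁, hcov₁, hrest₁⟩ := exists_reflTransGen_cover_range (cubeCons d b) h
  have hC₁ : C₁ ∘ cubeCons d (!b) = C ∘ cubeCons d (!b) :=
    funext fun y => hrest₁ _ fun ⟨z, hz⟩ => by simp at hz
  obtain ⟨C₂, hC₁C₂, hcov₂, hrest₂⟩ := exists_reflTransGen_cover_range (cubeCons d (!b)) (hC₁ ▸ h')
  refine ⟨C₂, hCC₁.trans hC₁C₂, fun x => ?_⟩
  rw [← Fin.cons_self_tail x]
  by_cases hx : x 0 = b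
  · rw [hrest₂ _ fun ⟨z, hz⟩ => by simp [hx] at hz]
    exact hx ▸ hcov₁ (Fin.tail x)
  · exact (Bool.eq_not_of_ne hx) ▸ hcov₂ (Fin.tail x)

theorem sum_eq_sum_cubeCons_add_sum_cubeCons_not {M : Type*} [AddCommMonoid M] (b : Bool)
    (F : (Fin (d + 1) → Bool) → M) :
    ∑ x, F x = ∑ y, F (cubeCons d b y) + ∑ y, F (cubeCons d (!b) y) := by
  rw [sum_pi_fin_succ, Fintype.sum_bool]
  cases b
  exacts [add_comm _ _, rfl]

theorem coverable_cube_of_three_pow_le_sum :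
    ∀ {d : ℕ} (C : (Fin d → Bool) → ℕ), 3 ^ d ≤ ∑ x, C x → Coverable (cube d) C
  | 0, C, hC => ⟨C, .refl, fun v => by rwa [pow_zero, Fintype.sum_subsingleton _ v] at hC⟩
  | d + 1, C, hC => by
    obtain ⟨b, hb⟩ : ∃ b, ∑ y, C (cubeCons d (!b) y) ≤ ∑ y, C (cubeCons d b y) := by
      rcases le_total (∑ y, C (cubeCons d false y)) (∑ y, C (cubeCons d true y)) with h | h
      exacts [⟨true, h⟩, ⟨false, h⟩]
    rw [sum_eq_sum_cubeCons_add_sum_cubeCons_not b, pow_succ] at hC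
    have hcard : Fintype.card (Fin d → Bool) = 2 ^ d := by simp
    have hpow : 2 ^ d ≤ 3 ^ d := Nat.pow_le_pow_left (by norm_num) d
    -- The truncated `3 ^ d - _` is `0` when the lighter half already holds `3 ^ d` pebbles.
    obtain ⟨C', hCC', hb', hnb'⟩ := exists_reflTransGen_transfer (H := cube (d + 1))
      (cubeCons d b).injective (cubeCons d (!b)).injective (fun y z => by simp)
      (cube_adj_cons_not b) (3 ^ d - ∑ y, C (cubeCons d (!b) y)) C (by omega)
    refine .of_reflTransGen hCC' (coverable_of_coverable_cons b ?_ ?_) <;>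
      refine coverable_cube_of_three_pow_le_sum _ ?_ <;>
      simp only [comp_apply] <;> omega

theorem two_pow_hammingDist_le_of_adj (r : Fin d → Bool) {u v : Fin d → Bool}
    (h : (cube d).Adj u v) : 2 ^ hammingDist v r ≤ 2 * 2 ^ hammingDist u r := by
  have huv : hammingDist u v = 1 := h
  have := hammingDist_triangle v u r
  rw [hammingDist_comm v u, huv] at this
  rw [← pow_succ']
  exact Nat.pow_le_pow_right two_pos (by omega)

theorem sum_two_pow_hammingDist (r : Fin d → Bool) : ∑ x, 2 ^ hammingDist x r = 3 ^ d :=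
  calc ∑ x, 2 ^ hammingDist x r = ∑ x : Fin d → Bool, ∏ i, if x i ≠ r i then 2 else 1 := by
        simp only [hammingDist, ← prod_const, prod_filter]
    _ = ∏ i, ∑ c : Bool, if c ≠ r i then 2 else 1 :=
        (Fintype.prod_sum fun i c => if c ≠ r i then 2 else 1).symm
    _ = ∏ _i : Fin d, 3 := prod_congr rfl fun i _ => by cases r i <;> rfl
    _ = 3 ^ d := by simp

theorem three_pow_le_of_coverable_single (r : Fin d → Bool) {m : ℕ}
    (h : Coverable (cube d) (Pi.single r m)) : 3 ^ d ≤ m := by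
  have := h.sum_weight_le fun _ _ => two_pow_hammingDist_le_of_adj r
  simpa [sum_two_pow_hammingDist, Pi.single_apply] using this

end Cube

theorem cover_pebbling_number_cube_general (d : ℕ) :
    IsLeast {m : ℕ | ∀ C : (Fin d → Bool) → ℕ, (∑ v, C v) = m → Coverable (cube d) C}
      (3 ^ d) :=
  ⟨fun C hC => coverable_cube_of_three_pow_le_sum C hC.ge,
    fun m hm => three_pow_le_of_coverable_single (fun _ => true) (hm _ (by simp))⟩

/-- The cover pebbling number of the `d`-dimensional hypercube equals `3^d`,
for every positive integer `d`: `3^d` is the least `m` such that every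
configuration of size `m` on `Q^d` is coverable. -/
theorem cover_pebbling_number_cube (d : ℕ) (hd : 0 < d) :
    IsLeast {m : ℕ | ∀ C : (Fin d → Bool) → ℕ, (∑ v, C v) = m → Coverable (cube d) C}
      (3 ^ d) :=
  cover_pebbling_number_cube_general d
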